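/- arXiv:1409.6413 — 2 statements merged into one kernel-verified Lean document; each statement's English description precedes it below -/
import Mathlib

section
/- Let M be any bivariate mean on (0,∞)² (not necessarily symmetric or homogeneous) and θ, σ fixed real numbers. Then lim_{x→∞} [ ln Γ(x+1) − (1/2)ln(2π) − (x+1/2)·ln M(x+θ, x+σ) + M(x+θ, x+σ) ] = 0. -/
/-!
With `y = x + 1/2` the expression equals `φ(x) - 1/2 log (2π) - (y log (M / y) - (M - y))`, where
`φ(x) = log Γ(x + 1) - y log y + y`. Since `M` lies between `x + θ` and `x + σ`, `M - y` stays
bounded, and `y log (1 + t / y) - t = O(t² / y)` shows that the bracket tends to `0`.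
Stirling's formula for real arguments, `φ(x) → 1/2 log (2π)`, follows from the one for `n!`:
log-convexity of `Γ` places `log Γ(x + 1)` within `log (n + 1) - log n` of the linear
interpolation `log n! + (x - n) log n`, `n = ⌊x⌋`, and the same logarithmic estimate, now with
`t = n - y`, converts `(n + 1/2) log n - n` into `y log y - y`.
-/

open Filter Real Set Topology
open scoped Nat

theorem abs_add_log_one_sub_le {x : ℝ} (hx : |x| ≤ 1 / 2) :
    |x + log (1 - x)| ≤ 2 * x ^ 2 := by
  have h := abs_log_sub_add_sum_range_le (hx.trans_lt (by norm_num)) 1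
  simp only [Finset.range_one, Finset.sum_singleton, zero_add, pow_one, Nat.cast_zero,
    div_one] at h
  calc |x + log (1 - x)| ≤ |x| ^ 2 / (1 - |x|) := h
    _ ≤ 2 * x ^ 2 := by
      rw [div_le_iff₀ (by linarith), sq_abs]
      nlinarith [mul_le_mul_of_nonneg_left hx (sq_nonneg x)]

theorem tendsto_mul_log_div_sub_sub {α : Type*} {l : Filter α} {u v : α → ℝ} {C : ℝ}
    (hv : Tendsto v l atTop) (huv : ∀ᶠ a in l, |u a - v a| ≤ C) :
    Tendsto (fun a => v a * log (u a / v a) - (u a - v a)) l (𝓝 0) := by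
  refine squeeze_zero_norm' ?_ ((tendsto_const_nhds (x := 2 * C ^ 2)).div_atTop hv)
  filter_upwards [huv, hv.eventually_ge_atTop (2 * C), hv.eventually_gt_atTop 0]
    with a hC hvC hv0
  set x := (v a - u a) / v a with hxdef
  have hx : |x| ≤ 1 / 2 := by
    rw [abs_div, abs_of_pos hv0, div_le_iff₀ hv0, abs_sub_comm]
    linarith
  have hrewrite : v a * log (u a / v a) - (u a - v a) = v a * (x + log (1 - x)) := by
    have hux : u a / v a = 1 - x := by rw [hxdef]; field_simp; ring
    rw [hux, hxdef]; field_simp; ring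
  rw [Real.norm_eq_abs, hrewrite, abs_mul, abs_of_pos hv0]
  calc v a * |x + log (1 - x)| ≤ v a * (2 * x ^ 2) := by grw [abs_add_log_one_sub_le hx]
    _ = 2 * |u a - v a| ^ 2 / v a := by rw [sq_abs, hxdef]; field_simp; ring
    _ ≤ 2 * C ^ 2 / v a := by gcongr

theorem tendsto_log_factorial_sub_stirling :
    Tendsto (fun n : ℕ => log n ! - (n + 1 / 2) * log n + n) atTop
      (𝓝 (1 / 2 * log (2 * π))) := by
  have hlim : log √π + 1 / 2 * log 2 = 1 / 2 * log (2 * π) := by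
    rw [log_sqrt pi_pos.le, log_mul two_ne_zero pi_ne_zero]; ring
  rw [← hlim]
  refine ((Stirling.tendsto_stirlingSeq_sqrt_pi.log (by positivity)).add_const _).congr' ?_
  filter_upwards [eventually_ne_atTop 0] with n hn
  have hn0 : (n : ℝ) ≠ 0 := Nat.cast_ne_zero.2 hn
  rw [Stirling.log_stirlingSeq_formula, log_mul two_ne_zero hn0, log_div hn0 (exp_ne_zero 1),
    log_exp]
  ring

theorem log_Gamma_add_one {y : ℝ} (hy : 0 < y) :
    log (Gamma (y + 1)) = log (Gamma y) + log y := by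
  rw [Gamma_add_one hy.ne', log_mul hy.ne' (Gamma_pos_of_pos hy).ne', add_comm]

theorem log_factorial_add_mul_log_le_log_Gamma {n : ℕ} (hn : n ≠ 0) {x : ℝ} (hx : n ≤ x) :
    log n ! + (x - n) * log n ≤ log (Gamma (x + 1)) := by
  obtain ⟨s, hs, rfl⟩ : ∃ s, 0 ≤ s ∧ x = n + s := ⟨x - n, by linarith, by ring⟩
  rcases hs.eq_or_lt with rfl | hs
  · simp [Gamma_nat_eq_factorial]
  have h := BohrMollerup.f_add_nat_ge convexOn_log_Gamma (log_Gamma_add_one ·)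
    (by omega : 2 ≤ n + 1) hs
  simpa [Gamma_nat_eq_factorial, add_right_comm] using h

theorem log_Gamma_le_log_factorial_add_mul_log {n : ℕ} {x : ℝ} (h₀ : n ≤ x) (h₁ : x ≤ n + 1) :
    log (Gamma (x + 1)) ≤ log n ! + (x - n) * log (n + 1) := by
  obtain ⟨s, hs₀, rfl⟩ : ∃ s, 0 ≤ s ∧ x = n + s := ⟨x - n, by linarith, by ring⟩
  rcases hs₀.eq_or_lt with rfl | hs₀
  · simp [Gamma_nat_eq_factorial]
  have h := BohrMollerup.f_add_nat_le convexOn_log_Gamma (log_Gamma_add_one ·)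
    n.succ_ne_zero hs₀ (by linarith)
  simpa [Gamma_nat_eq_factorial, add_right_comm] using h

theorem tendsto_log_Gamma_add_one_sub_stirling :
    Tendsto (fun x : ℝ => log (Gamma (x + 1)) - (x + 1 / 2) * log (x + 1 / 2) + (x + 1 / 2))
      atTop (𝓝 (1 / 2 * log (2 * π))) := by
  have hfloor : Tendsto (fun x : ℝ => ⌊x⌋₊) atTop atTop := tendsto_nat_floor_atTop
  have hfloor_le : ∀ᶠ x : ℝ in atTop, 1 ≤ ⌊x⌋₊ ∧ (⌊x⌋₊ : ℝ) ≤ x ∧ x < ⌊x⌋₊ + 1 := by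
    filter_upwards [eventually_ge_atTop 1] with x hx
    exact ⟨Nat.le_floor (by exact_mod_cast hx), Nat.floor_le (by linarith),
      Nat.lt_floor_add_one x⟩
  have hinterp : Tendsto
      (fun x : ℝ => log (Gamma (x + 1)) - log ⌊x⌋₊ ! - (x - ⌊x⌋₊) * log ⌊x⌋₊) atTop (𝓝 0) := by
    refine tendsto_of_tendsto_of_tendsto_of_le_of_le' tendsto_const_nhds
      (tendsto_log_nat_add_one_sub_log.comp hfloor) ?_ ?_
    · filter_upwards [hfloor_le] with x ⟨hn, hnx, _⟩
      linarith [log_factorial_add_mul_log_le_log_Gamma (by omega : ⌊x⌋₊ ≠ 0) hnx]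
    · filter_upwards [hfloor_le] with x ⟨hn, hnx, hxn⟩
      have hmono : log ⌊x⌋₊ ≤ log (⌊x⌋₊ + 1) :=
        log_le_log (by exact_mod_cast hn) (by linarith)
      have hfrac : x - ⌊x⌋₊ ≤ 1 := by linarith
      simp only [Function.comp_apply]
      nlinarith [log_Gamma_le_log_factorial_add_mul_log hnx hxn.le]
  have hshift := tendsto_mul_log_div_sub_sub (u := fun x : ℝ => (⌊x⌋₊ : ℝ))
    (v := fun x : ℝ => x + 1 / 2) (C := 3 / 2)
    (tendsto_atTop_add_const_right _ _ tendsto_id) <| by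
      filter_upwards [hfloor_le] with x ⟨_, hnx, hxn⟩
      rw [abs_le]; constructor <;> linarith
  have hsum := ((tendsto_log_factorial_sub_stirling.comp hfloor).add hinterp).add hshift
  rw [add_zero, add_zero] at hsum
  refine hsum.congr' ?_
  filter_upwards [hfloor_le] with x ⟨hn, hnx, _⟩
  simp only [Function.comp_apply]
  rw [log_div (by positivity) (by linarith)]
  ring

theorem gamma_asymptotic_M (M : ℝ → ℝ → ℝ)
    (hmean : ∀ a > (0:ℝ), ∀ b > (0:ℝ), min a b ≤ M a b ∧ M a b ≤ max a b)
    (θ σ : ℝ) :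
    Tendsto (fun x : ℝ => Real.log (Real.Gamma (x + 1)) - (1 / 2) * Real.log (2 * π)
        - (x + 1 / 2) * Real.log (M (x + θ) (x + σ)) + M (x + θ) (x + σ))
      atTop (nhds 0) := by
  have hhalf : Tendsto (fun x : ℝ => x + 1 / 2) atTop atTop :=
    tendsto_atTop_add_const_right _ _ tendsto_id
  have hpos : ∀ᶠ x : ℝ in atTop, 0 < x + θ ∧ 0 < x + σ ∧ 0 < x + 1 / 2 := by
    filter_upwards [eventually_gt_atTop (-θ), eventually_gt_atTop (-σ),
      eventually_gt_atTop (-1 / 2)] with x hθ hσ hy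
    exact ⟨by linarith, by linarith, by linarith⟩
  have hmem : ∀ᶠ x : ℝ in atTop, M (x + θ) (x + σ) ∈ uIcc (x + θ) (x + σ) :=
    hpos.mono fun x hx => hmean _ hx.1 _ hx.2.1
  have hbounded :
      ∀ᶠ x : ℝ in atTop, |M (x + θ) (x + σ) - (x + 1 / 2)| ≤ |σ - θ| + |θ - 1 / 2| := by
    filter_upwards [hmem] with x hx
    calc |M (x + θ) (x + σ) - (x + 1 / 2)|
        ≤ |M (x + θ) (x + σ) - (x + θ)| + |x + θ - (x + 1 / 2)| := abs_sub_le _ _ _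
      _ ≤ |x + σ - (x + θ)| + |x + θ - (x + 1 / 2)| := by
          grw [abs_sub_left_of_mem_uIcc hx]
      _ = |σ - θ| + |θ - 1 / 2| := by ring_nf
  have hlim := (tendsto_log_Gamma_add_one_sub_stirling.sub_const (1 / 2 * log (2 * π))).sub
    (tendsto_mul_log_div_sub_sub hhalf hbounded)
  rw [sub_self, sub_zero] at hlim
  refine hlim.congr' ?_
  filter_upwards [hpos, hmem] with x ⟨hθ, hσ, hy⟩ hx
  have hM : 0 < M (x + θ) (x + σ) := (lt_min hθ hσ).trans_le hx.1
  rw [log_div hM.ne' hy.ne']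
  ring
end

section
/- For every integer k ≥ 1 and every x > 0, (k−1)!/x^k + k!/(2x^{k+1}) < (−1)^{k+1}·ψ^(k)(x) < (k−1)!/x^k + k!/x^{k+1}. -/
open Real

/-- The digamma function `ψ = Γ'/Γ`. -/
noncomputable def digamma (x : ℝ) : ℝ := deriv Real.Gamma x / Real.Gamma x

/-!
On `x > 0`, `log ∘ Gamma` is convex with `log Γ(x + 1) = log Γ(x) + log x`, so comparing `ψ` with
slopes squeezes `ψ(x + n + 1)` between `log (x + n)` and `log (x + n + 1)`. Hence
`ψ(x) = lim (log n - ∑_{m ≤ n} 1 / (x + m))`, and differentiating termwise gives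
`ψ^(k)(x) = (-1)^(k+1) k! ζ(k + 1, x)`. The bounds on `ζ(k + 1, x)` come from summing over `m` the
right-endpoint and trapezoid estimates for
`∫ t in x + m..x + m + 1, k / t ^ (k + 1) = (x + m)^(-k) - (x + m + 1)^(-k)`, which telescopes
to `x^(-k)`.
-/

open Filter Topology Finset
open scoped Nat

lemma inv_pow_sub_inv_pow_eq {a b : ℝ} (ha : a ≠ 0) (hb : b ≠ 0) (k : ℕ) :
    (a ^ k)⁻¹ - (b ^ k)⁻¹
      = (b - a) * (∑ i ∈ range k, b ^ i * a ^ (k - 1 - i)) / (a ^ k * b ^ k) := by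
  rw [mul_comm (b - a), geom_sum₂_mul]
  field_simp

section InvPowEstimates

/- The right-endpoint and trapezoid estimates for `∫ t in a..b, k / t ^ (k + 1)`. -/

variable {a b : ℝ} (ha : 0 < a) (hab : a < b) {k : ℕ}
include ha hab

lemma mul_inv_pow_succ_lt_inv_pow_sub_inv_pow (hk : k ≠ 0) :
    k * (b - a) * (b ^ (k + 1))⁻¹ < (a ^ k)⁻¹ - (b ^ k)⁻¹ := by
  have hb : 0 < b := ha.trans hab
  have hsum : k * a ^ k < b * ∑ i ∈ range k, b ^ i * a ^ (k - 1 - i) := by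
    rw [mul_sum]
    calc (k : ℝ) * a ^ k = ∑ i ∈ range k, a ^ k := by simp
      _ < ∑ i ∈ range k, b * (b ^ i * a ^ (k - 1 - i)) := by
        refine sum_lt_sum_of_nonempty (nonempty_range_iff.2 hk) fun i hi => ?_
        have hi' : a ^ (i + 1) < b ^ (i + 1) := pow_lt_pow_left₀ hab ha.le (by omega)
        calc a ^ k = a ^ (i + 1) * a ^ (k - 1 - i) := by
              rw [← pow_add]; congr 1; have := mem_range.1 hi; omega
          _ < b ^ (i + 1) * a ^ (k - 1 - i) := by gcongr
          _ = b * (b ^ i * a ^ (k - 1 - i)) := by ring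
  rw [inv_pow_sub_inv_pow_eq ha.ne' hb.ne', ← div_eq_mul_inv,
    div_lt_div_iff₀ (by positivity) (by positivity)]
  have hba : 0 < (b - a) * b ^ k := by have := sub_pos.2 hab; positivity
  calc k * (b - a) * (a ^ k * b ^ k) = (k * a ^ k) * ((b - a) * b ^ k) := by ring
    _ < (b * ∑ i ∈ range k, b ^ i * a ^ (k - 1 - i)) * ((b - a) * b ^ k) := by gcongr
    _ = _ := by ring

lemma inv_pow_sub_inv_pow_lt_trapezoid (hk : k ≠ 0) :
    (a ^ k)⁻¹ - (b ^ k)⁻¹ < k * (b - a) * ((a ^ (k + 1))⁻¹ + (b ^ (k + 1))⁻¹) / 2 := by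
  have hb : 0 < b := ha.trans hab
  set S := ∑ i ∈ range k, b ^ i * a ^ (k - 1 - i) with hS
  have hsum : 2 * (a * b * S) < k * (a ^ (k + 1) + b ^ (k + 1)) := by
    have hreflect : S = ∑ i ∈ range k, b ^ (k - 1 - i) * a ^ i := by
      rw [hS, ← sum_range_reflect]
      refine sum_congr rfl fun i hi => ?_
      rw [show k - 1 - (k - 1 - i) = i by have := mem_range.1 hi; omega]
    have hpair : 2 * S = ∑ i ∈ range k, (b ^ i * a ^ (k - 1 - i) + b ^ (k - 1 - i) * a ^ i) := by
      rw [sum_add_distrib, ← hreflect, ← hS, two_mul]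
    rw [← mul_assoc, mul_comm _ (a * b), mul_assoc, hpair, mul_sum]
    calc ∑ i ∈ range k, a * b * (b ^ i * a ^ (k - 1 - i) + b ^ (k - 1 - i) * a ^ i)
        < ∑ i ∈ range k, (a ^ (k + 1) + b ^ (k + 1)) := by
          refine sum_lt_sum_of_nonempty (nonempty_range_iff.2 hk) fun i hi => ?_
          obtain ⟨j, rfl⟩ : ∃ j, k = i + j + 1 := ⟨k - 1 - i, by have := mem_range.1 hi; omega⟩
          have hi' : a ^ (i + 1) < b ^ (i + 1) := pow_lt_pow_left₀ hab ha.le (by omega)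
          have hj' : a ^ (j + 1) < b ^ (j + 1) := pow_lt_pow_left₀ hab ha.le (by omega)
          rw [show i + j + 1 - 1 - i = j by omega]
          have hprod := mul_pos (sub_pos.2 hi') (sub_pos.2 hj')
          linear_combination hprod
      _ = k * (a ^ (k + 1) + b ^ (k + 1)) := by simp [mul_add]
  have hgap : k * (b - a) * ((a ^ (k + 1))⁻¹ + (b ^ (k + 1))⁻¹) / 2 - (b - a) * S / (a ^ k * b ^ k)
      = (b - a) * (k * (a ^ (k + 1) + b ^ (k + 1)) - 2 * (a * b * S))
        / (2 * a ^ (k + 1) * b ^ (k + 1)) := by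
    field_simp
    ring
  have hpos := div_pos (mul_pos (sub_pos.2 hab) (sub_pos.2 hsum))
    (by positivity : (0 : ℝ) < 2 * a ^ (k + 1) * b ^ (k + 1))
  rw [inv_pow_sub_inv_pow_eq ha.ne' hb.ne']
  linarith

end InvPowEstimates

lemma hasSum_sub_succ_of_antitone {f : ℕ → ℝ} (hf : Antitone f) (hf0 : Tendsto f atTop (𝓝 0)) :
    HasSum (fun n => f n - f (n + 1)) (f 0) := by
  rw [hasSum_iff_tendsto_nat_of_nonneg fun n => sub_nonneg.2 (hf n.le_succ)]
  simp_rw [sum_range_sub']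
  simpa using tendsto_const_nhds.sub hf0

lemma summable_inv_add_nat_pow {x : ℝ} (hx : 0 ≤ x) {p : ℕ} (hp : 2 ≤ p) :
    Summable fun m : ℕ => ((x + m) ^ p)⁻¹ := by
  refine ((Real.summable_one_div_nat_add_rpow x p).2 (by exact_mod_cast hp)).congr fun m => ?_
  rw [abs_of_nonneg (by positivity), Real.rpow_natCast, one_div, add_comm]

lemma hasSum_inv_add_nat_pow_sub {x : ℝ} (hx : 0 < x) {k : ℕ} (hk : k ≠ 0) :
    HasSum (fun m : ℕ => ((x + m) ^ k)⁻¹ - ((x + (m + 1 : ℕ)) ^ k)⁻¹) (x ^ k)⁻¹ := by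
  have hanti : Antitone fun m : ℕ => ((x + m) ^ k)⁻¹ := fun m n hmn => by
    have : (m : ℝ) ≤ n := by exact_mod_cast hmn
    dsimp only
    gcongr
  have hlim : Tendsto (fun m : ℕ => ((x + m) ^ k)⁻¹) atTop (𝓝 0) :=
    ((tendsto_pow_atTop hk).comp
      (tendsto_atTop_add_const_left _ x tendsto_natCast_atTop_atTop)).inv_tendsto_atTop
  simpa using hasSum_sub_succ_of_antitone hanti hlim

/-- `hurwitz p x` is the Hurwitz zeta value `ζ(p, x)`. -/
noncomputable def hurwitz (p : ℕ) (x : ℝ) : ℝ := ∑' m : ℕ, ((x + m) ^ p)⁻¹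

lemma hasSum_hurwitz {p : ℕ} (hp : 2 ≤ p) {x : ℝ} (hx : 0 ≤ x) :
    HasSum (fun m : ℕ => ((x + m) ^ p)⁻¹) (hurwitz p x) :=
  (summable_inv_add_nat_pow hx hp).hasSum

lemma hasSum_hurwitz_tail {p : ℕ} (hp : 2 ≤ p) {x : ℝ} (hx : 0 ≤ x) :
    HasSum (fun m : ℕ => ((x + (m + 1 : ℕ)) ^ p)⁻¹) (hurwitz p x - (x ^ p)⁻¹) := by
  simpa using (hasSum_nat_add_iff' 1).2 (hasSum_hurwitz hp hx)

section HurwitzBounds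

variable {x : ℝ} (hx : 0 < x) {k : ℕ} (hk : k ≠ 0)
include hx hk

lemma hurwitz_succ_lt : hurwitz (k + 1) x < (k * x ^ k)⁻¹ + (x ^ (k + 1))⁻¹ := by
  have hterm : ∀ m : ℕ, k * ((x + (m + 1 : ℕ)) ^ (k + 1))⁻¹
      < ((x + m) ^ k)⁻¹ - ((x + (m + 1 : ℕ)) ^ k)⁻¹ := fun m => by
    have h := mul_inv_pow_succ_lt_inv_pow_sub_inv_pow (k := k) (by positivity : 0 < x + m)
      (by push_cast; linarith : x + m < x + (m + 1 : ℕ)) hk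
    rwa [show x + ((m + 1 : ℕ) : ℝ) - (x + m) = 1 by push_cast; ring, mul_one] at h
  have h := hasSum_lt (fun m => (hterm m).le) (hterm 0)
    ((hasSum_hurwitz_tail (by omega) hx.le).mul_left (k : ℝ)) (hasSum_inv_add_nat_pow_sub hx hk)
  have hk' : (0 : ℝ) < k := by positivity
  rw [mul_inv, ← div_eq_inv_mul]
  rw [← lt_div_iff₀' hk'] at h
  linarith

lemma lt_hurwitz_succ : (k * x ^ k)⁻¹ + (2 * x ^ (k + 1))⁻¹ < hurwitz (k + 1) x := by
  have hterm : ∀ m : ℕ, ((x + m) ^ k)⁻¹ - ((x + (m + 1 : ℕ)) ^ k)⁻¹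
      < k * (((x + m) ^ (k + 1))⁻¹ + ((x + (m + 1 : ℕ)) ^ (k + 1))⁻¹) / 2 := fun m => by
    have h := inv_pow_sub_inv_pow_lt_trapezoid (k := k) (by positivity : 0 < x + m)
      (by push_cast; linarith : x + m < x + (m + 1 : ℕ)) hk
    rwa [show x + ((m + 1 : ℕ) : ℝ) - (x + m) = 1 by push_cast; ring, mul_one] at h
  have hsum := (hasSum_hurwitz (by omega : 2 ≤ k + 1) hx.le).add
    (hasSum_hurwitz_tail (p := k + 1) (by omega) hx.le)
  have h := hasSum_lt (fun m => (hterm m).le) (hterm 0) (hasSum_inv_add_nat_pow_sub hx hk)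
    ((hsum.mul_left (k : ℝ)).div_const 2)
  have hk' : (0 : ℝ) < k := by positivity
  rw [mul_inv, mul_inv, ← div_eq_inv_mul]
  rw [mul_div_assoc, ← div_lt_iff₀' hk'] at h
  linarith

end HurwitzBounds

lemma TendstoUniformlyOn.comp_tendsto_index {ι ι' α β : Type*} [UniformSpace β] {F : ι → α → β}
    {f : α → β} {p : Filter ι} {s : Set α} (h : TendstoUniformlyOn F f p s) {g : ι' → ι}
    {q : Filter ι'} (hg : Tendsto g q p) : TendstoUniformlyOn (fun n => F (g n)) f q s :=
  fun u hu => hg.eventually (h u hu)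

lemma hasDerivAt_inv_pow (p : ℕ) {y : ℝ} (hy : y ≠ 0) :
    HasDerivAt (fun z => (z ^ p)⁻¹) (-p * (y ^ (p + 1))⁻¹) y := by
  have h := hasDerivAt_zpow (-p) y (Or.inl hy)
  simp only [zpow_neg, zpow_natCast] at h
  refine h.congr_deriv ?_
  rw [show -(p : ℤ) - 1 = -((p + 1 : ℕ) : ℤ) by push_cast; ring, zpow_neg, zpow_natCast]
  push_cast
  ring

lemma norm_inv_add_nat_pow_le {a z : ℝ} (ha : 0 < a) (haz : a ≤ z) (m p : ℕ) :
    ‖((z + m) ^ p)⁻¹‖ ≤ ((a + m) ^ p)⁻¹ := by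
  rw [norm_inv, norm_pow, Real.norm_of_nonneg (by linarith [m.cast_nonneg (α := ℝ)])]
  gcongr

lemma hasDerivAt_hurwitz {p : ℕ} (hp : 2 ≤ p) {x : ℝ} (hx : 0 < x) :
    HasDerivAt (hurwitz p) (-p * hurwitz (p + 1) x) x := by
  have hx2 : 0 < x / 2 := by positivity
  have hmem : x ∈ Set.Ioi (x / 2) := by simp only [Set.mem_Ioi]; linarith
  have h := hasDerivAt_tsum_of_isPreconnected (g := fun (m : ℕ) (z : ℝ) => ((z + m) ^ p)⁻¹)
    (g' := fun (m : ℕ) (z : ℝ) => -p * ((z + m) ^ (p + 1))⁻¹)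
    ((summable_inv_add_nat_pow hx2.le (by omega : 2 ≤ p + 1)).mul_left (p : ℝ))
    isOpen_Ioi isPreconnected_Ioi
    (fun m z hz => (hasDerivAt_inv_pow p
      (by have := hx2.trans hz; positivity : (0 : ℝ) < z + m).ne').comp_add_const z m)
    (fun m z hz => by
      rw [norm_mul, norm_neg, Real.norm_natCast]
      exact mul_le_mul_of_nonneg_left (norm_inv_add_nat_pow_le hx2 (Set.mem_Ioi.1 hz).le m (p + 1))
        p.cast_nonneg)
    hmem (summable_inv_add_nat_pow hx.le hp) hmem
  rwa [tsum_mul_left] at h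

lemma hasDerivAt_log_Gamma {x : ℝ} (hx : 0 < x) :
    HasDerivAt (fun y => log (Gamma y)) (digamma x) x :=
  (differentiableAt_Gamma fun m => (neg_nonpos.2 m.cast_nonneg).trans_lt hx |>.ne').hasDerivAt.log
    (Gamma_pos_of_pos hx).ne'

lemma digamma_add_one {x : ℝ} (hx : 0 < x) : digamma (x + 1) = digamma x + x⁻¹ := by
  have hfe : (fun y => log (Gamma (y + 1))) =ᶠ[𝓝 x] fun y => log (Gamma y) + log y := by
    filter_upwards [lt_mem_nhds hx] with y hy
    rw [Gamma_add_one hy.ne', log_mul hy.ne' (Gamma_pos_of_pos hy).ne', add_comm]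
  exact ((hasDerivAt_log_Gamma (by linarith)).comp_add_const x 1).unique
    (((hasDerivAt_log_Gamma hx).add (hasDerivAt_log hx.ne')).congr_of_eventuallyEq hfe)

lemma digamma_add_nat {x : ℝ} (hx : 0 < x) (n : ℕ) :
    digamma (x + n) = digamma x + ∑ m ∈ range n, (x + m)⁻¹ := by
  induction n with
  | zero => simp
  | succ n ih =>
    rw [sum_range_succ, ← add_assoc, ← ih, Nat.cast_succ, ← add_assoc,
      digamma_add_one (by positivity)]

lemma slope_log_Gamma {x : ℝ} (hx : 0 < x) : slope (log ∘ Gamma) x (x + 1) = log x := by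
  rw [slope_def_field, Function.comp_apply, Function.comp_apply, Gamma_add_one hx.ne',
    log_mul hx.ne' (Gamma_pos_of_pos hx).ne']
  ring

/- `ψ(x + 1)` lies between the slopes `log x` and `log (x + 1)` of the convex `log ∘ Gamma` on
`[x, x + 1]` and `[x + 1, x + 2]`. -/

lemma log_le_digamma_add_one {x : ℝ} (hx : 0 < x) : log x ≤ digamma (x + 1) :=
  slope_log_Gamma hx ▸ convexOn_log_Gamma.slope_le_of_hasDerivAt hx
    (by simp only [Set.mem_Ioi]; linarith) (lt_add_one x) (hasDerivAt_log_Gamma (by linarith))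

lemma digamma_add_one_le_log {x : ℝ} (hx : 0 < x) : digamma (x + 1) ≤ log (x + 1) :=
  slope_log_Gamma (by linarith : 0 < x + 1) ▸ convexOn_log_Gamma.le_slope_of_hasDerivAt
    (by simp only [Set.mem_Ioi]; linarith) (by simp only [Set.mem_Ioi]; linarith) (lt_add_one _)
    (hasDerivAt_log_Gamma (by linarith))

lemma tendsto_log_sub_sum_inv_add_nat {x : ℝ} (hx : 0 < x) :
    Tendsto (fun n : ℕ => log n - ∑ m ∈ range (n + 1), (x + m)⁻¹) atTop (𝓝 (digamma x)) := by
  have hsqueeze : Tendsto (fun n : ℕ => digamma (x + (n + 1 : ℕ)) - log n) atTop (𝓝 0) := by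
    refine tendsto_of_tendsto_of_tendsto_of_le_of_le
      ((tendsto_log_comp_add_sub_log x).comp tendsto_natCast_atTop_atTop)
      ((tendsto_log_comp_add_sub_log (x + 1)).comp tendsto_natCast_atTop_atTop)
      (fun n => ?_) (fun n => ?_)
    all_goals
      have e : x + ((n + 1 : ℕ) : ℝ) = x + n + 1 := by push_cast; ring
      simp only [Function.comp_apply, e]
    · have := log_le_digamma_add_one (by positivity : 0 < x + n)
      rw [add_comm (n : ℝ) x]
      linarith
    · have := digamma_add_one_le_log (by positivity : 0 < x + n)
      rw [show (n : ℝ) + (x + 1) = x + n + 1 by ring]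
      linarith
  have h := (tendsto_const_nhds (x := digamma x)).sub hsqueeze
  rw [sub_zero] at h
  refine h.congr fun n => ?_
  rw [digamma_add_nat hx]
  ring

lemma hasDerivAt_digamma {x : ℝ} (hx : 0 < x) : HasDerivAt digamma (hurwitz 2 x) x := by
  have hx2 : 0 < x / 2 := by positivity
  have hunif : TendstoUniformlyOn (fun n (z : ℝ) => ∑ m ∈ range (n + 1), ((z + m) ^ 2)⁻¹)
      (hurwitz 2) atTop (Set.Ioi (x / 2)) :=
    (tendstoUniformlyOn_tsum_nat (summable_inv_add_nat_pow hx2.le le_rfl)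
      fun m z hz => norm_inv_add_nat_pow_le hx2 (Set.mem_Ioi.1 hz).le m 2).comp_tendsto_index
      (tendsto_add_atTop_nat 1)
  refine hasDerivAt_of_tendstoUniformlyOn isOpen_Ioi hunif (Eventually.of_forall fun n z hz => ?_)
    (fun z hz => tendsto_log_sub_sum_inv_add_nat (hx2.trans hz))
    (by simp only [Set.mem_Ioi]; linarith)
  have hzm : ∀ m : ℕ, z + m ≠ 0 := fun m => by have := hx2.trans hz; positivity
  simpa using (HasDerivAt.fun_sum fun m _ => (hasDerivAt_inv (hzm m)).comp_add_const z m).const_sub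
    (log n)

lemma iteratedDeriv_digamma {k : ℕ} (hk : 1 ≤ k) {x : ℝ} (hx : 0 < x) :
    iteratedDeriv k digamma x = (-1) ^ (k + 1) * k ! * hurwitz (k + 1) x := by
  induction k, hk using Nat.le_induction generalizing x with
  | base => simpa using (hasDerivAt_digamma hx).deriv
  | succ n hn ih =>
    have hev : iteratedDeriv n digamma
        =ᶠ[𝓝 x] fun z => (-1) ^ (n + 1) * n ! * hurwitz (n + 1) z := by
      filter_upwards [lt_mem_nhds hx] with z hz using ih hz
    rw [iteratedDeriv_succ, hev.deriv_eq, ((hasDerivAt_hurwitz (by omega) hx).const_mul _).deriv,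
      Nat.factorial_succ]
    push_cast
    ring

theorem polygamma_bounds (k : ℕ) (hk : 1 ≤ k) (x : ℝ) (hx : 0 < x) :
    (Nat.factorial (k - 1)) / x ^ k + (Nat.factorial k) / (2 * x ^ (k + 1))
        < (-1 : ℝ) ^ (k + 1) * iteratedDeriv k digamma x ∧
    (-1 : ℝ) ^ (k + 1) * iteratedDeriv k digamma x
        < (Nat.factorial (k - 1)) / x ^ k + (Nat.factorial k) / x ^ (k + 1) := by
  have hk0 : k ≠ 0 := by omega
  have hsign : (-1 : ℝ) ^ (k + 1) * iteratedDeriv k digamma x = k ! * hurwitz (k + 1) x := by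
    rw [iteratedDeriv_digamma hk hx, ← mul_assoc, ← mul_assoc, ← pow_add, ← two_mul, pow_mul]
    norm_num
  have hfact : (k - 1)! / x ^ k = (k ! : ℝ) * (k * x ^ k)⁻¹ := by
    rw [← Nat.mul_factorial_pred hk0]
    push_cast
    field_simp
  rw [hsign, hfact, div_eq_mul_inv, div_eq_mul_inv, ← mul_add, ← mul_add]
  have hpos : (0 : ℝ) < k ! := by positivity
  exact ⟨mul_lt_mul_of_pos_left (lt_hurwitz_succ hx hk0) hpos,
    mul_lt_mul_of_pos_left (hurwitz_succ_lt hx hk0) hpos⟩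
end
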